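/- Define G : (0, π) → ℝ by G(r) = cos(r)·log(2·tan(r/2)) + 1 − cos(r). For every unit vector p ∈ S² ⊂ ℝ³, the positively 1-homogeneous function u : ℝ³ ∖ ℝp → ℝ defined by u(x) = |x|·G(θ_p(x)), where θ_p(x) = arccos(⟨x, p⟩/|x|) ∈ (0, π) is the angle between x and p, is harmonic: u is twice differentiable with vanishing Euclidean Laplacian on the open set ℝ³ ∖ ℝp. -/

import Mathlib

/- STATEMENT 7: The function u(x) = |x|·G(θ_p(x)), with
G(r) = cos(r)·log(2·tan(r/2)) + 1 − cos(r), is harmonic on ℝ³ ∖ ℝp,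
for every unit vector p ∈ S² ⊂ ℝ³. -/

noncomputable section
open Real Set Topology Filter

abbrev E3 := EuclideanSpace ℝ (Fin 3)

/-- The profile `G(r) = cos r · log(2 tan(r/2)) + 1 − cos r`. -/
def Gprof (r : ℝ) : ℝ := Real.cos r * Real.log (2 * Real.tan (r / 2)) + 1 - Real.cos r

/-- The Euclidean Laplacian of `u` at `x`, as the sum of second directional
derivatives along the standard orthonormal coordinate directions. -/
def lap3 (u : E3 → ℝ) (x : E3) : ℝ :=
  ∑ i : Fin 3, fderiv ℝ (fun y => fderiv ℝ u y (EuclideanSpace.single i 1)) x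
    (EuclideanSpace.single i 1)

/-- `u` is harmonic on `U`: twice differentiable with vanishing Euclidean Laplacian. -/
def HarmonicOn3 (u : E3 → ℝ) (U : Set E3) : Prop :=
  ContDiffOn ℝ 2 u U ∧ ∀ x ∈ U, lap3 u x = 0


def Sf (p x : E3) : ℝ := inner ℝ p x
def Qf (p x : E3) : ℝ := (‖x‖ - Sf p x) * (‖x‖ + Sf p x)
def Af (p x : E3) : ℝ :=
  Real.log 2 - 1 + (Real.log (‖x‖ - Sf p x) - Real.log (‖x‖ + Sf p x)) * (2:ℝ)⁻¹
    - Sf p x * ‖x‖ * (Qf p x)⁻¹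
def Bf (p x : E3) : ℝ := ‖x‖ * (Qf p x)⁻¹
def Ff (p x : E3) : ℝ :=
  Sf p x * Real.log 2 + Sf p x * (2:ℝ)⁻¹ * (Real.log (‖x‖ - Sf p x) - Real.log (‖x‖ + Sf p x))
    + (‖x‖ - Sf p x)

lemma hasFDerivAt_norm3 (x : E3) (hx : x ≠ 0) :
    HasFDerivAt (fun y : E3 => ‖y‖) (‖x‖⁻¹ • innerSL ℝ x) x := by
  have h1 : HasFDerivAt (fun y : E3 => ‖y‖ ^ 2) ((2 : ℕ) • (innerSL ℝ x)) x := by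
    simpa using (hasFDerivAt_id x).norm_sq
  have hne : ‖x‖ ^ 2 ≠ 0 := pow_ne_zero 2 (norm_ne_zero_iff.mpr hx)
  have h2 := h1.sqrt hne
  have he : (fun y : E3 => Real.sqrt (‖y‖ ^ 2)) = fun y : E3 => ‖y‖ :=
    funext fun y => Real.sqrt_sq (norm_nonneg y)
  rw [he] at h2
  refine h2.congr_fderiv ?_
  ext v
  have hx' : ‖x‖ ≠ 0 := norm_ne_zero_iff.mpr hx
  simp [Real.sqrt_sq (norm_nonneg x)]
  field_simp

lemma hasFDerivAt_Sf (p x : E3) : HasFDerivAt (Sf p) (innerSL ℝ p) x :=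
  (innerSL ℝ p).hasFDerivAt

lemma hasFDerivAt_Ff (p x : E3) (hx : x ≠ 0) (h1 : 0 < ‖x‖ - Sf p x)
    (h2 : 0 < ‖x‖ + Sf p x) :
    HasFDerivAt (Ff p) (Af p x • innerSL ℝ p + Bf p x • innerSL ℝ x) x := by
  have hx0 : (0:ℝ) < ‖x‖ := norm_pos_iff.mpr hx
  have hR := hasFDerivAt_norm3 x hx
  have hS := hasFDerivAt_Sf p x
  have hsub := hR.sub hS
  have hadd := hR.add hS
  have hl1 := hsub.log h1.ne'
  have hl2 := hadd.log h2.ne'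
  have h := ((hS.mul_const (Real.log 2)).add
      ((hS.mul_const ((2:ℝ)⁻¹)).mul (hl1.sub hl2))).add hsub
  have hF : (Ff p) = fun y => Sf p y * Real.log 2
      + Sf p y * (2:ℝ)⁻¹ * (Real.log (‖y‖ - Sf p y) - Real.log (‖y‖ + Sf p y))
      + (‖y‖ - Sf p y) := rfl
  rw [hF]
  refine HasFDerivAt.congr_fderiv h ?_
  ext v
  simp [Af, Bf, Qf]
  field_simp
  ring

lemma hasFDerivAt_Qf (p x : E3) (hx : x ≠ 0) :
    HasFDerivAt (Qf p)
      ((‖x‖ - Sf p x) • (‖x‖⁻¹ • innerSL ℝ x + innerSL ℝ p)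
        + (‖x‖ + Sf p x) • (‖x‖⁻¹ • innerSL ℝ x - innerSL ℝ p)) x := by
  have hR := hasFDerivAt_norm3 x hx
  have hS := hasFDerivAt_Sf p x
  exact (hR.sub hS).mul (hR.add hS)

lemma hasFDerivAt_Bf (p x : E3) (hx : x ≠ 0) (h1 : 0 < ‖x‖ - Sf p x)
    (h2 : 0 < ‖x‖ + Sf p x) :
    HasFDerivAt (Bf p)
      ((2 * Sf p x * ‖x‖ * (Qf p x)⁻¹ ^ 2) • innerSL ℝ p
        + ((‖x‖ * Qf p x)⁻¹ - 2 * ‖x‖ * (Qf p x)⁻¹ ^ 2) • innerSL ℝ x) x := by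
  have hx0 : (0:ℝ) < ‖x‖ := norm_pos_iff.mpr hx
  have hq : (0:ℝ) < Qf p x := mul_pos h1 h2
  have hR := hasFDerivAt_norm3 x hx
  have hQ := hasFDerivAt_Qf p x hx
  have hinv := (hasDerivAt_inv hq.ne').comp_hasFDerivAt x hQ
  have h := hR.mul hinv
  have hB : (Bf p) = fun y => ‖y‖ * (Qf p y)⁻¹ := rfl
  rw [hB]
  refine HasFDerivAt.congr_fderiv h ?_
  ext v
  simp [Qf]
  field_simp
  ring

lemma hasFDerivAt_Af (p x : E3) (hx : x ≠ 0) (h1 : 0 < ‖x‖ - Sf p x)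
    (h2 : 0 < ‖x‖ + Sf p x) :
    HasFDerivAt (Af p)
      ((-(2 * ‖x‖ * (Qf p x)⁻¹) - 2 * Sf p x ^ 2 * ‖x‖ * (Qf p x)⁻¹ ^ 2) • innerSL ℝ p
        + (2 * Sf p x * ‖x‖ * (Qf p x)⁻¹ ^ 2) • innerSL ℝ x) x := by
  have hx0 : (0:ℝ) < ‖x‖ := norm_pos_iff.mpr hx
  have hq : (0:ℝ) < Qf p x := mul_pos h1 h2
  have hR := hasFDerivAt_norm3 x hx
  have hS := hasFDerivAt_Sf p x
  have hsub := hR.sub hS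
  have hadd := hR.add hS
  have hl1 := hsub.log h1.ne'
  have hl2 := hadd.log h2.ne'
  have hQ := hasFDerivAt_Qf p x hx
  have hinv := (hasDerivAt_inv hq.ne').comp_hasFDerivAt x hQ
  have h := (((hl1.sub hl2).mul_const ((2:ℝ)⁻¹)).const_add (Real.log 2 - 1)).sub
      ((hS.mul hR).mul hinv)
  have hA : (Af p) = fun y => Real.log 2 - 1
      + (Real.log (‖y‖ - Sf p y) - Real.log (‖y‖ + Sf p y)) * (2:ℝ)⁻¹
      - Sf p y * ‖y‖ * (Qf p y)⁻¹ := rfl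
  rw [hA]
  refine HasFDerivAt.congr_fderiv h ?_
  ext v
  simp [Qf]
  field_simp
  ring

lemma isOpen_U (p : E3) : IsOpen {x : E3 | ∀ t : ℝ, x ≠ t • p} := by
  have he : {x : E3 | ∀ t : ℝ, x ≠ t • p} = (↑(Submodule.span ℝ ({p} : Set E3)))ᶜ := by
    ext x
    simp only [Set.mem_setOf_eq, Set.mem_compl_iff, SetLike.mem_coe,
      Submodule.mem_span_singleton, not_exists]
    constructor
    · intro h t ht; exact h t ht.symm
    · intro h t ht; exact h t ht.symm
  rw [he]
  exact (Submodule.span ℝ ({p} : Set E3)).closed_of_finiteDimensional.isOpen_compl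

lemma U_facts (p x : E3) (hp : ‖p‖ = 1) (hxU : ∀ t : ℝ, x ≠ t • p) :
    x ≠ 0 ∧ 0 < ‖x‖ - Sf p x ∧ 0 < ‖x‖ + Sf p x := by
  have hx0 : x ≠ 0 := by
    intro h; exact hxU 0 (by simp [h])
  have hle : |Sf p x| ≤ ‖x‖ := by
    have := abs_real_inner_le_norm p x
    rwa [hp, one_mul] at this
  have hne : |Sf p x| ≠ ‖x‖ := by
    intro h
    have hp0 : p ≠ 0 := by intro h'; rw [h', norm_zero] at hp; norm_num at hp
    have : ‖(inner ℝ p x : ℝ)‖ = ‖p‖ * ‖x‖ := by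
      rw [Real.norm_eq_abs, hp, one_mul]; exact h
    obtain ⟨r, -, hr⟩ := (norm_inner_eq_norm_iff (𝕜 := ℝ) hp0 hx0).mp this
    exact hxU r hr
  have habs : |Sf p x| < ‖x‖ := lt_of_le_of_ne hle hne
  obtain ⟨h1, h2⟩ := abs_lt.mp habs
  exact ⟨hx0, by linarith, by linarith⟩

lemma key_eq (p x : E3) (hp : ‖p‖ = 1) (hx0 : x ≠ 0) (h1 : 0 < ‖x‖ - Sf p x)
    (h2 : 0 < ‖x‖ + Sf p x) :
    ‖x‖ * Gprof (Real.arccos ((inner ℝ x p : ℝ) / ‖x‖)) = Ff p x := by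
  have hsx : (inner ℝ x p : ℝ) = Sf p x := real_inner_comm p x
  set r : ℝ := ‖x‖ with hr
  set s : ℝ := Sf p x with hs
  have hr0 : (0:ℝ) < r := norm_pos_iff.mpr hx0
  have hc1 : -1 < s / r := by rw [lt_div_iff₀ hr0]; linarith
  have hc2 : s / r < 1 := by rw [div_lt_one hr0]; linarith
  set c : ℝ := s / r with hc
  set θ : ℝ := Real.arccos c with hθ
  have hcos : Real.cos θ = c := Real.cos_arccos hc1.le hc2.le
  have hθ0 : 0 < θ := Real.arccos_pos.mpr hc2
  have hθπ : θ < π := by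
    rcases lt_or_eq_of_le (Real.arccos_le_pi c) with h | h
    · exact h
    · exfalso; rw [hθ] at *; rw [h, Real.cos_pi] at hcos; rw [← hcos] at hc1; linarith
  have hsin : Real.sin θ = Real.sqrt (1 - c ^ 2) := Real.sin_arccos c
  have hcφ : 0 < Real.cos (θ / 2) :=
    Real.cos_pos_of_mem_Ioo ⟨by linarith [Real.pi_pos], by linarith⟩
  -- tan half-angle
  have hsin2 : Real.sin θ = 2 * Real.sin (θ / 2) * Real.cos (θ / 2) := by
    rw [show θ = 2 * (θ / 2) by ring, Real.sin_two_mul]; ring_nf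
  have hcos2 : 1 + Real.cos θ = 2 * Real.cos (θ / 2) ^ 2 := by
    rw [show θ = 2 * (θ / 2) by ring, Real.cos_two_mul]; ring_nf
  have htan : 2 * Real.tan (θ / 2) = 2 * Real.sin θ / (1 + Real.cos θ) := by
    rw [Real.tan_eq_sin_div_cos, hsin2, hcos2]
    field_simp
  -- compute the sqrt
  have h1c : 1 - c ^ 2 = (r - s) * (r + s) / r ^ 2 := by
    rw [hc]; field_simp; ring
  have hsqrt : Real.sqrt (1 - c ^ 2) = Real.sqrt (r - s) * Real.sqrt (r + s) / r := by
    rw [h1c, Real.sqrt_div' _ (by positivity), Real.sqrt_mul h1.le,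
      Real.sqrt_sq hr0.le]
  have hq1 : (0:ℝ) < Real.sqrt (r - s) := Real.sqrt_pos.mpr h1
  have hq2 : (0:ℝ) < Real.sqrt (r + s) := Real.sqrt_pos.mpr h2
  have h2tan : 2 * Real.tan (θ / 2) = 2 * (Real.sqrt (r - s) * Real.sqrt (r + s)) / (r + s) := by
    rw [htan, hsin, hcos, hsqrt, hc]
    rw [show 1 + s / r = (r + s) / r by field_simp]
    field_simp
  have hlog : Real.log (2 * Real.tan (θ / 2))
      = Real.log 2 + Real.log (r - s) / 2 - Real.log (r + s) / 2 := by
    rw [h2tan, Real.log_div (by positivity) h2.ne', Real.log_mul two_ne_zero (by positivity),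
      Real.log_mul hq1.ne' hq2.ne', Real.log_sqrt h1.le, Real.log_sqrt h2.le]
    ring
  rw [hsx, ← hc, ← hθ]
  have hGoal : Gprof θ = Real.cos θ * Real.log (2 * Real.tan (θ / 2)) + 1 - Real.cos θ := rfl
  rw [hGoal, hcos, hlog]
  have hFf : Ff p x = s * Real.log 2 + s * (2:ℝ)⁻¹ * (Real.log (r - s) - Real.log (r + s)) + (r - s) := rfl
  rw [hFf, hc]
  field_simp
  ring

lemma contDiffAt_Ff (p x : E3) (hx0 : x ≠ 0) (h1 : 0 < ‖x‖ - Sf p x)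
    (h2 : 0 < ‖x‖ + Sf p x) : ContDiffAt ℝ 2 (Ff p) x := by
  have hcS : ContDiffAt ℝ 2 (Sf p) x := (ContinuousLinearMap.contDiff (innerSL ℝ p)).contDiffAt
  have hcR : ContDiffAt ℝ 2 (fun y : E3 => ‖y‖) x := contDiffAt_norm ℝ hx0
  have hl1 : ContDiffAt ℝ 2 (fun y : E3 => Real.log (‖y‖ - Sf p y)) x :=
    (hcR.sub hcS).log h1.ne'
  have hl2 : ContDiffAt ℝ 2 (fun y : E3 => Real.log (‖y‖ + Sf p y)) x :=
    (hcR.add hcS).log h2.ne'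
  exact ((hcS.mul contDiffAt_const).add
    ((hcS.mul contDiffAt_const).mul (hl1.sub hl2))).add (hcR.sub hcS)

theorem statement7 (p : E3) (hp : ‖p‖ = 1) :
    HarmonicOn3 (fun x => ‖x‖ * Gprof (Real.arccos ((inner ℝ x p : ℝ) / ‖x‖)))
      {x : E3 | ∀ t : ℝ, x ≠ t • p} := by
  rw [HarmonicOn3]
  set U : Set E3 := {x : E3 | ∀ t : ℝ, x ≠ t • p} with hU
  set u : E3 → ℝ := fun x => ‖x‖ * Gprof (Real.arccos ((inner ℝ x p : ℝ) / ‖x‖)) with hu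
  have hUopen : IsOpen U := isOpen_U p
  have hueq : ∀ y ∈ U, u y = Ff p y := by
    intro y hy
    obtain ⟨hy0, hy1, hy2⟩ := U_facts p y hp hy
    exact key_eq p y hp hy0 hy1 hy2
  constructor
  · intro x hxU
    obtain ⟨hx0, h1, h2⟩ := U_facts p x hp hxU
    have heq : u =ᶠ[𝓝 x] Ff p :=
      Filter.eventuallyEq_of_mem (hUopen.mem_nhds hxU) hueq
    exact ((contDiffAt_Ff p x hx0 h1 h2).congr_of_eventuallyEq heq).contDiffWithinAt
  · intro x hxU
    obtain ⟨hx0, h1, h2⟩ := U_facts p x hp hxU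
    -- first derivative identification on U
    have hfe : ∀ y ∈ U, fderiv ℝ u y = Af p y • innerSL ℝ p + Bf p y • innerSL ℝ y := by
      intro y hy
      obtain ⟨hy0, hy1, hy2⟩ := U_facts p y hp hy
      have heq : u =ᶠ[𝓝 y] Ff p :=
        Filter.eventuallyEq_of_mem (hUopen.mem_nhds hy) hueq
      rw [heq.fderiv_eq, (hasFDerivAt_Ff p y hy0 hy1 hy2).fderiv]
    have hev : ∀ i : Fin 3, (fun y => fderiv ℝ u y (EuclideanSpace.single i 1))
        =ᶠ[𝓝 x] (fun y => Af p y * p i + Bf p y * y i) := by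
      intro i
      filter_upwards [hUopen.mem_nhds hxU] with y hy
      rw [hfe y hy]
      simp [EuclideanSpace.inner_single_right, real_inner_comm]
    have hA := hasFDerivAt_Af p x hx0 h1 h2
    have hB := hasFDerivAt_Bf p x hx0 h1 h2
    have hΦ : ∀ i : Fin 3, HasFDerivAt (fun y : E3 => Af p y * p i + Bf p y * y i)
        ((p i) • ((-(2 * ‖x‖ * (Qf p x)⁻¹) - 2 * Sf p x ^ 2 * ‖x‖ * (Qf p x)⁻¹ ^ 2) • innerSL ℝ p
            + (2 * Sf p x * ‖x‖ * (Qf p x)⁻¹ ^ 2) • innerSL ℝ x)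
          + (Bf p x • (EuclideanSpace.proj i : E3 →L[ℝ] ℝ)
            + (x i) • ((2 * Sf p x * ‖x‖ * (Qf p x)⁻¹ ^ 2) • innerSL ℝ p
              + ((‖x‖ * Qf p x)⁻¹ - 2 * ‖x‖ * (Qf p x)⁻¹ ^ 2) • innerSL ℝ x))) x := by
      intro i
      exact (hA.mul_const (p i)).add
        (hB.mul ((EuclideanSpace.proj i : E3 →L[ℝ] ℝ).hasFDerivAt))
    have hterm : ∀ i : Fin 3,
        fderiv ℝ (fun y => fderiv ℝ u y (EuclideanSpace.single i 1)) x
          (EuclideanSpace.single i 1)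
        = ((-(2 * ‖x‖ * (Qf p x)⁻¹) - 2 * Sf p x ^ 2 * ‖x‖ * (Qf p x)⁻¹ ^ 2) * p i
              + (2 * Sf p x * (Qf p x)⁻¹ ^ 2 * ‖x‖) * x i) * p i
          + (Bf p x
            + ((2 * Sf p x * ‖x‖ * (Qf p x)⁻¹ ^ 2) * p i
              + ((‖x‖ * Qf p x)⁻¹ - 2 * ‖x‖ * (Qf p x)⁻¹ ^ 2) * x i) * x i) := by
      intro i
      rw [(hev i).fderiv_eq, (hΦ i).fderiv]
      simp [EuclideanSpace.inner_single_right, real_inner_comm]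
      ring
    have hpp : p 0 * p 0 + p 1 * p 1 + p 2 * p 2 = 1 := by
      have := real_inner_self_eq_norm_sq p
      rw [hp, PiLp.inner_apply, Fin.sum_univ_three] at this
      simp [PiLp.inner_apply, Fin.sum_univ_three, RCLike.inner_apply, conj_trivial] at this
      linear_combination this
    have hxx : x 0 * x 0 + x 1 * x 1 + x 2 * x 2 = ‖x‖ ^ 2 := by
      have := real_inner_self_eq_norm_sq x
      rw [PiLp.inner_apply, Fin.sum_univ_three] at this
      simp [PiLp.inner_apply, Fin.sum_univ_three, RCLike.inner_apply, conj_trivial] at this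
      linear_combination this
    have hpx : p 0 * x 0 + p 1 * x 1 + p 2 * x 2 = Sf p x := by
      simp [Sf, PiLp.inner_apply, Fin.sum_univ_three, RCLike.inner_apply, conj_trivial]
      ring
    have hr0 : (0:ℝ) < ‖x‖ := norm_pos_iff.mpr hx0
    have hq : (0:ℝ) < Qf p x := mul_pos h1 h2
    have hQ : Qf p x = ‖x‖ ^ 2 - Sf p x ^ 2 := by unfold Qf; ring
    have hq' : ‖x‖ ^ 2 - Sf p x ^ 2 ≠ 0 := by rw [← hQ]; exact hq.ne'
    have key : (-(2 * ‖x‖ * (Qf p x)⁻¹) - 2 * Sf p x ^ 2 * ‖x‖ * (Qf p x)⁻¹ ^ 2)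
        + (2 * Sf p x * (Qf p x)⁻¹ ^ 2 * ‖x‖ + 2 * Sf p x * ‖x‖ * (Qf p x)⁻¹ ^ 2) * Sf p x
        + ((‖x‖ * Qf p x)⁻¹ - 2 * ‖x‖ * (Qf p x)⁻¹ ^ 2) * ‖x‖ ^ 2
        + 3 * (‖x‖ * (Qf p x)⁻¹) = 0 := by
      rw [hQ]
      field_simp
      ring
    rw [lap3, Fin.sum_univ_three, hterm 0, hterm 1, hterm 2]
    simp only [Bf]
    linear_combination (-(2 * ‖x‖ * (Qf p x)⁻¹) - 2 * Sf p x ^ 2 * ‖x‖ * (Qf p x)⁻¹ ^ 2) * hpp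
      + (2 * Sf p x * (Qf p x)⁻¹ ^ 2 * ‖x‖ + 2 * Sf p x * ‖x‖ * (Qf p x)⁻¹ ^ 2) * hpx
      + ((‖x‖ * Qf p x)⁻¹ - 2 * ‖x‖ * (Qf p x)⁻¹ ^ 2) * hxx + key
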